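/- arXiv:0802.2133 — 4 statements merged into one kernel-verified Lean document; each statement's English description precedes it below -/
import Mathlib

section
/- Let n ≥ 1 and let f ∈ ℂ[x₀,…,xₙ] be a smooth homogeneous polynomial of degree k ≥ 2. Then the partial derivatives ∂f/∂x₀,…,∂f/∂xₙ are linearly independent over ℂ. -/
open MvPolynomial

/-- A homogeneous polynomial is smooth if the only common zero of its
partial derivatives in `ℂ^{n+1}` is the origin. -/
def IsSmooth (n : ℕ) (f : MvPolynomial (Fin (n + 1)) ℂ) : Prop :=
  ∀ x : Fin (n + 1) → ℂ,
    (∀ i, MvPolynomial.eval x (MvPolynomial.pderiv i f) = 0) → x = 0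

lemma pderiv_comm_aux {m : ℕ} (i j : Fin m) (f : MvPolynomial (Fin m) ℂ) :
    pderiv i (pderiv j f) = pderiv j (pderiv i f) := by
  induction f using MvPolynomial.induction_on' with
  | add p q hp hq => simp [hp, hq]
  | monomial d a =>
    rcases eq_or_ne i j with rfl | hij
    · rfl
    · simp only [pderiv_monomial]
      rw [tsub_tsub, tsub_tsub, add_comm]
      congr 1
      rw [Finsupp.tsub_apply, Finsupp.tsub_apply,
        Finsupp.single_eq_of_ne hij, Finsupp.single_eq_of_ne (Ne.symm hij)]
      simp only [Nat.sub_zero]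
      ring

lemma euler_aux {m k : ℕ} (f : MvPolynomial (Fin m) ℂ) (hf : f.IsHomogeneous k) :
    ∑ i, X i * pderiv i f = (k : ℂ) • f := by
  calc ∑ i, X i * pderiv i f
      = ∑ i, X i * pderiv i (∑ d ∈ f.support, monomial d (coeff d f)) := by
        rw [← f.as_sum]
    _ = ∑ d ∈ f.support, ∑ i, X i * pderiv i (monomial d (coeff d f)) := by
        simp only [map_sum, Finset.mul_sum]
        rw [Finset.sum_comm]
    _ = ∑ d ∈ f.support, (k : ℂ) • monomial d (coeff d f) := by
        refine Finset.sum_congr rfl fun d hd => ?_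
        have hdk : (∑ i, d i) = k := by
          have h0 := hf (MvPolynomial.mem_support_iff.mp hd)
          rw [← h0, Finsupp.weight_apply, Finsupp.sum_fintype]
          · simp
          · simp
        have key : ∀ i, X i * pderiv i (monomial d (coeff d f)) =
            monomial d (coeff d f * (d i : ℂ)) := by
          intro i
          rw [pderiv_monomial]
          rcases Nat.eq_zero_or_pos (d i) with h | h
          · simp [h]
          · rw [← pow_one (X i), ← monomial_single_add, add_tsub_cancel_of_le]
            exact Finsupp.single_le_iff.mpr h
          
        rw [Finset.sum_congr rfl (fun i _ => key i),
          ← map_sum (monomial d) (fun i => coeff d f * (d i : ℂ)) Finset.univ,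
          ← Finset.mul_sum, ← Nat.cast_sum, hdk, smul_monomial, smul_eq_mul, mul_comm]
    _ = (k : ℂ) • f := by rw [← Finset.smul_sum, ← f.as_sum]

lemma euler_deriv_aux {m k : ℕ} (f : MvPolynomial (Fin m) ℂ) (hf : f.IsHomogeneous k)
    (j : Fin m) :
    ∑ i, X i * pderiv i (pderiv j f) = ((k : ℂ) - 1) • pderiv j f := by
  have h := congrArg (pderiv j) (euler_aux f hf)
  rw [map_sum, Derivation.map_smul] at h
  simp only [pderiv_mul, pderiv_X] at h
  rw [Finset.sum_add_distrib] at h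
  have h1 : (∑ i, Pi.single (M := fun _ => MvPolynomial (Fin m) ℂ) j 1 i * pderiv i f)
      = pderiv j f := by
    rw [Finset.sum_eq_single j]
    · simp
    · intro b _ hb
      exact mul_eq_zero_of_left (Pi.single_eq_of_ne hb 1) _
    · simp
  rw [h1] at h
  have h2 : (∑ i, X i * pderiv i (pderiv j f)) = (k : ℂ) • pderiv j f - pderiv j f := by
    rw [← h, add_sub_cancel_left]
    exact Finset.sum_congr rfl fun x _ => by rw [pderiv_comm_aux]
  rw [h2, sub_smul, one_smul]

theorem pderivs_linearIndependent_of_smooth (n k : ℕ) (hn : 1 ≤ n) (hk : 2 ≤ k)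
    (f : MvPolynomial (Fin (n + 1)) ℂ)
    (hf : f.IsHomogeneous k) (hfs : IsSmooth n f) :
    LinearIndependent ℂ (fun i : Fin (n + 1) => MvPolynomial.pderiv i f) := by
  rw [Fintype.linearIndependent_iff]
  intro g hg i
  suffices h : g = 0 by rw [h]; rfl
  apply hfs
  intro j
  -- derivative of the relation: ∑ i, g i • pderiv i (pderiv j f) = 0
  have hd : ∑ i, g i • pderiv i (pderiv j f) = 0 := by
    have h := congrArg (pderiv j) hg
    rw [map_sum, map_zero] at h
    rw [← h]
    refine Finset.sum_congr rfl fun i _ => ?_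
    rw [Derivation.map_smul, pderiv_comm_aux]
  -- evaluate Euler identity for pderiv j f at g
  have he := congrArg (eval g) (euler_deriv_aux f hf j)
  rw [map_sum, smul_eq_C_mul, map_mul, eval_C] at he
  have hL : (∑ i, eval g (X i * pderiv i (pderiv j f))) = 0 := by
    have : (∑ i, eval g (X i * pderiv i (pderiv j f)))
        = eval g (∑ i, g i • pderiv i (pderiv j f)) := by
      rw [map_sum]
      refine Finset.sum_congr rfl fun i _ => ?_
      rw [eval_mul, eval_X, smul_eq_C_mul, map_mul, eval_C]
    rw [this, hd, map_zero]
  rw [hL] at he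
  have hk1 : (k : ℂ) - 1 ≠ 0 := by
    rw [sub_ne_zero]
    exact_mod_cast (by omega : k ≠ 1)
  exact ((mul_eq_zero.mp he.symm).resolve_left hk1)
end

section
/- Let n ≥ 1 and let f, g ∈ ℂ[x₀,…,xₙ] be smooth homogeneous polynomials of the same degree k ≥ 2 with J(f) = J(g), and suppose g is not a scalar multiple of f. Then there exists (λ, μ) ∈ ℂ² with (λ, μ) ≠ (0, 0) such that the polynomial F = λf + μg is nonzero and its partial derivatives ∂F/∂x₀,…,∂F/∂xₙ are linearly dependent over ℂ. -/
open MvPolynomial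

/-- The Jacobi ideal of `f`: the ideal generated by its partial derivatives. -/
noncomputable def jacobiIdeal (n : ℕ) (f : MvPolynomial (Fin (n + 1)) ℂ) :
    Ideal (MvPolynomial (Fin (n + 1)) ℂ) :=
  Ideal.span (Set.range fun i => MvPolynomial.pderiv i f)

lemma aux_pderiv_isHomogeneous {σ : Type*} [DecidableEq σ] {f : MvPolynomial σ ℂ} {k : ℕ}
    (hf : f.IsHomogeneous k) (i : σ) : (pderiv i f).IsHomogeneous (k - 1) := by
  conv_lhs => rw [f.as_sum]
  rw [map_sum]
  apply IsHomogeneous.sum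
  intro d hd
  rw [pderiv_monomial]
  by_cases hdi : d i = 0
  · simp [hdi, isHomogeneous_zero]
  · apply isHomogeneous_monomial
    have hdk : (Finsupp.weight 1) d = k := hf (MvPolynomial.mem_support_iff.mp hd)
    have hle : Finsupp.single i 1 ≤ d := by
      rw [Finsupp.single_le_iff]; omega
    have h1 : (d - Finsupp.single i 1) + Finsupp.single i 1 = d := tsub_add_cancel_of_le hle
    have h3 : Finsupp.weight (1 : σ → ℕ) (Finsupp.single i 1) = 1 := by
      simp [Finsupp.weight_apply, Finsupp.sum_single_index]
    have h2 : Finsupp.weight (1 : σ → ℕ) (d - Finsupp.single i 1)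
        + Finsupp.weight (1 : σ → ℕ) (Finsupp.single i 1) = k := by
      rw [← map_add, h1, hdk]
    rw [Finsupp.degree_eq_weight_one]
    simp only [Pi.one_def] at h2 h3
    omega

lemma aux_homogeneousComponent_mul {σ : Type*} (h q : MvPolynomial σ ℂ) {d : ℕ}
    (hq : q.IsHomogeneous d) :
    homogeneousComponent d (h * q) = C (coeff 0 h) * q := by
  conv_lhs => rw [← sum_homogeneousComponent h]
  rw [Finset.sum_mul, map_sum]
  rw [Finset.sum_eq_single 0]
  · rw [homogeneousComponent_zero, homogeneousComponent_C_mul,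
      homogeneousComponent_of_mem ((mem_homogeneousSubmodule _ _).mpr hq), if_pos rfl]
  · intro e _ hne
    have hmul : (homogeneousComponent e h * q).IsHomogeneous (e + d) :=
      (homogeneousComponent_isHomogeneous e h).mul hq
    rw [homogeneousComponent_of_mem ((mem_homogeneousSubmodule _ _).mpr hmul),
      if_neg (fun hEq => hne (by omega))]
  · intro h0
    exact absurd (Finset.mem_range.mpr (Nat.succ_pos _)) h0

lemma aux_mem_span {σ : Type*} [Fintype σ] {N : Type*} [Fintype N]
    {v : N → MvPolynomial σ ℂ} {d : ℕ}
    (hv : ∀ i, (v i).IsHomogeneous d) {p : MvPolynomial σ ℂ} (hp : p.IsHomogeneous d)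
    (hmem : p ∈ Ideal.span (Set.range v)) : p ∈ Submodule.span ℂ (Set.range v) := by
  obtain ⟨c, hc⟩ := Ideal.mem_span_range_iff_exists_fun.mp hmem
  rw [Submodule.mem_span_range_iff_exists_fun]
  refine ⟨fun i => coeff 0 (c i), ?_⟩
  have hcomp := congrArg (homogeneousComponent d) hc
  rw [map_sum] at hcomp
  have hterms : ∀ i ∈ Finset.univ, homogeneousComponent d (c i * v i) = coeff 0 (c i) • v i := by
    intro i _
    rw [aux_homogeneousComponent_mul (c i) (v i) (hv i), MvPolynomial.smul_eq_C_mul]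
  rw [Finset.sum_congr rfl hterms,
    homogeneousComponent_of_mem ((mem_homogeneousSubmodule _ _).mpr hp), if_pos rfl] at hcomp
  exact hcomp

theorem exists_pencil_member_with_dependent_pderivs (n k : ℕ) (hn : 1 ≤ n) (hk : 2 ≤ k)
    (f g : MvPolynomial (Fin (n + 1)) ℂ)
    (hf : f.IsHomogeneous k) (hg : g.IsHomogeneous k)
    (hfs : IsSmooth n f) (hgs : IsSmooth n g)
    (hJ : jacobiIdeal n f = jacobiIdeal n g)
    (hne : ¬ ∃ c : ℂ, g = c • f) :
    ∃ p : ℂ × ℂ, p ≠ (0, 0) ∧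
      p.1 • f + p.2 • g ≠ 0 ∧
      ¬ LinearIndependent ℂ
        (fun i : Fin (n + 1) => MvPolynomial.pderiv i (p.1 • f + p.2 • g)) := by
  set v : Fin (n + 1) → MvPolynomial (Fin (n + 1)) ℂ := fun i => pderiv i f with hv
  set w : Fin (n + 1) → MvPolynomial (Fin (n + 1)) ℂ := fun i => pderiv i g with hw
  have hvh : ∀ i, (v i).IsHomogeneous (k - 1) := fun i => aux_pderiv_isHomogeneous hf i
  have hwh : ∀ i, (w i).IsHomogeneous (k - 1) := fun i => aux_pderiv_isHomogeneous hg i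
  have hwmem : ∀ i, w i ∈ Submodule.span ℂ (Set.range v) := by
    intro i
    apply aux_mem_span hvh (hwh i)
    have : w i ∈ jacobiIdeal n g := Ideal.subset_span ⟨i, rfl⟩
    rw [← hJ] at this
    exact this
  choose A hA using fun i => (Submodule.mem_span_range_iff_exists_fun ℂ).mp (hwmem i)
  -- hA : ∀ i, ∑ j, A i j • v j = w i
  set M : Matrix (Fin (n + 1)) (Fin (n + 1)) ℂ := Matrix.of A with hM
  obtain ⟨μ, hμ⟩ := Module.End.exists_eigenvalue (Matrix.toLin' M.transpose)
  obtain ⟨c, hc⟩ := hμ.exists_hasEigenvector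
  have heig : ∀ j, ∑ i, A i j * c i = μ * c j := by
    intro j
    have := congrFun hc.apply_eq_smul j
    simpa [Matrix.toLin'_apply, Matrix.mulVec, dotProduct, hM] using this
  refine ⟨(-μ, 1), by simp, ?_, ?_⟩
  · intro h0
    apply hne
    refine ⟨μ, ?_⟩
    have h1 : -(μ • f) + g = 0 := by
      simpa [neg_smul] using h0
    rw [neg_add_eq_sub] at h1
    exact sub_eq_zero.mp h1
  · intro hLI
    have key : ∑ i, c i • pderiv i ((-μ, (1:ℂ)).1 • f + (-μ, (1:ℂ)).2 • g) = 0 := by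
      have hterm : ∀ i : Fin (n + 1),
          pderiv i ((-μ) • f + (1:ℂ) • g) = (-μ) • v i + w i := by
        intro i
        simp [hv, hw, map_add, map_smul]
      have h1 : ∑ i, c i • w i = μ • ∑ j, c j • v j := by
        calc ∑ i, c i • w i = ∑ i, c i • ∑ j, A i j • v j := by
              exact Finset.sum_congr rfl fun i _ => by rw [hA i]
          _ = ∑ i, ∑ j, (c i * A i j) • v j := by
              simp [Finset.smul_sum, smul_smul]
          _ = ∑ j, ∑ i, (c i * A i j) • v j := Finset.sum_comm
          _ = ∑ j, (∑ i, c i * A i j) • v j := by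
              simp [Finset.sum_smul]
          _ = ∑ j, (μ * c j) • v j := by
              refine Finset.sum_congr rfl fun j _ => ?_
              rw [show ∑ i, c i * A i j = ∑ i, A i j * c i from
                Finset.sum_congr rfl fun i _ => mul_comm _ _, heig j]
          _ = μ • ∑ j, c j • v j := by
              simp [Finset.smul_sum, smul_smul]
      calc ∑ i, c i • pderiv i ((-μ, (1:ℂ)).1 • f + (-μ, (1:ℂ)).2 • g)
          = ∑ i, c i • ((-μ) • v i + w i) := by
            exact Finset.sum_congr rfl fun i _ => by rw [hterm i]
        _ = ∑ i, ((-μ) • (c i • v i) + c i • w i) := by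
            refine Finset.sum_congr rfl fun i _ => ?_
            rw [smul_add, smul_comm]
        _ = (-μ) • (∑ i, c i • v i) + ∑ i, c i • w i := by
            rw [Finset.sum_add_distrib, Finset.smul_sum]
        _ = (-μ) • (∑ i, c i • v i) + μ • ∑ j, c j • v j := by rw [h1]
        _ = 0 := by rw [neg_smul, neg_add_cancel]
    have := Fintype.linearIndependent_iff.mp hLI c key
    exact hc.2 (funext fun i => this i)
end

section
/- Let f ∈ ℂ[x] be a homogeneous cubic in the single variable x and g ∈ ℂ[y, z] a homogeneous cubic in the variables y, z, and suppose that the plane cubic F = f(x) + g(y, z) ∈ ℂ[x, y, z] is smooth. Then F can be brought to the Fermat cubic by a projective linear coordinate change: there exist a ℂ-algebra automorphism φ of ℂ[x, y, z] induced by an element of GL₃(ℂ) and a nonzero scalar c ∈ ℂ such that φ(F) = c·(x³ + y³ + z³). -/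
open MvPolynomial

/-- A homogeneous polynomial in `ℂ[x, y, z]` is smooth if the only common zero of its
partial derivatives in `ℂ³` is the origin. -/
def IsSmooth3 (F : MvPolynomial (Fin 3) ℂ) : Prop :=
  ∀ x : Fin 3 → ℂ, (∀ i, MvPolynomial.eval x (MvPolynomial.pderiv i F) = 0) → x = 0

noncomputable def d30 : Fin 3 →₀ ℕ := Finsupp.single 1 3
noncomputable def d21 : Fin 3 →₀ ℕ := Finsupp.single 1 2 + Finsupp.single 2 1
noncomputable def d12 : Fin 3 →₀ ℕ := Finsupp.single 1 1 + Finsupp.single 2 2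
noncomputable def d03 : Fin 3 →₀ ℕ := Finsupp.single 2 3

lemma omega_exists : ∃ ω : ℂ, ω^2 + ω + 1 = 0 := by
  refine ⟨(-1 + Real.sqrt 3 * Complex.I)/2, ?_⟩
  have h3 : (Real.sqrt 3 : ℂ)^2 = 3 := by
    norm_cast
    rw [Real.sq_sqrt]; norm_num
  linear_combination (Complex.I^2/4)*h3 + (3/4)*Complex.I_sq

lemma master (a k u0 v0 u1 v1 u2 v2 : ℂ) (ha : a ≠ 0) (hk : k ≠ 0)
    (h01 : u0*v1 - u1*v0 ≠ 0) (h02 : u0*v2 - u2*v0 ≠ 0) (h12 : u1*v2 - u2*v1 ≠ 0) :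
    ∃ α P1 P2 Q1 Q2 c : ℂ, c ≠ 0 ∧ α ≠ 0 ∧ P1*Q2 - P2*Q1 ≠ 0 ∧
      ∀ x y z : ℂ, a*(α*x)^3
          + k*(u0*(P1*y+P2*z)+v0*(Q1*y+Q2*z))*(u1*(P1*y+P2*z)+v1*(Q1*y+Q2*z))
              *(u2*(P1*y+P2*z)+v2*(Q1*y+Q2*z))
        = c*(x^3+y^3+z^3) := by
  obtain ⟨ω, hω⟩ := omega_exists
  have hω0 : ω ≠ 0 := by intro h; rw [h] at hω; norm_num at hω
  have hω1 : ω ≠ 1 := by intro h; rw [h] at hω; norm_num at hω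
  have hω3 : ω^3 = 1 := by linear_combination (ω - 1)*hω
  set δ := u0*v1 - u1*v0 with hδ
  set γ1 := u2*v1 - u1*v2 with hγ1
  set γ2 := u0*v2 - u2*v0 with hγ2
  have hγ1' : γ1 ≠ 0 := by intro h; apply h12; linear_combination -h
  have hγ2' : γ2 ≠ 0 := h02
  set E1 := -ω*γ2 with hE1
  set E2 := -ω^2*γ1 with hE2
  have hE : E1*E2 = γ1*γ2 := by linear_combination (γ1*γ2)*hω3
  set P1 := v1*E1 - v0*E2 with hP1
  set Q1 := u0*E2 - u1*E1 with hQ1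
  set P2 := v1*E1 - v0*E2*ω with hP2
  set Q2 := u0*E2*ω - u1*E1 with hQ2
  set c := k*δ^2*γ1^2*γ2^2 with hc
  have hc' : c ≠ 0 := by
    simp only [hc]
    exact mul_ne_zero (mul_ne_zero (mul_ne_zero hk (pow_ne_zero 2 h01)) (pow_ne_zero 2 hγ1'))
      (pow_ne_zero 2 hγ2')
  obtain ⟨α, hα⟩ := IsAlgClosed.exists_pow_nat_eq (c/a) (n := 3) (by norm_num)
  have hα0 : α ≠ 0 := by
    intro h
    rw [h, zero_pow (by norm_num)] at hα
    exact hc' (by field_simp at hα; simpa using hα.symm)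
  have hαc : a*α^3 = c := by rw [hα]; field_simp
  have hdet : P1*Q2 - P2*Q1 ≠ 0 := by
    have h5 : P1*Q2 - P2*Q1 = γ1*γ2*(ω-1)*δ := by
      simp only [hP1, hP2, hQ1, hQ2]
      linear_combination (γ1*γ2*(ω-1)*δ)*hω3
    rw [h5]
    exact mul_ne_zero (mul_ne_zero (mul_ne_zero hγ1' hγ2') (sub_ne_zero.mpr hω1)) h01
  refine ⟨α, P1, P2, Q1, Q2, c, hc', hα0, hdet, fun x y z => ?_⟩
  have f0 : u0*(P1*y+P2*z)+v0*(Q1*y+Q2*z) = δ*E1*(y+z) := by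
    simp only [hP1, hP2, hQ1, hQ2, hδ]; ring
  have f1 : u1*(P1*y+P2*z)+v1*(Q1*y+Q2*z) = δ*E2*(y+ω*z) := by
    simp only [hP1, hP2, hQ1, hQ2, hδ]; ring
  have f2 : u2*(P1*y+P2*z)+v2*(Q1*y+Q2*z) = γ1*γ2*(y+ω^2*z) := by
    simp only [hP1, hP2, hQ1, hQ2, hE1, hE2, hγ1, hγ2]
    linear_combination (-((u2*v1-u1*v2)*(u0*v2-u2*v0))*(y+z))*hω
      + (-((u2*v1-u1*v2)*(u0*v2-u2*v0))*z)*hω3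
  rw [f0, f1, f2]
  linear_combination x^3*hαc + k*δ^2*γ1*γ2*((y+z)*(y+ω*z)*(y+ω^2*z))*hE
    + c*(y^2*z+y*z^2)*hω + c*(y*z^2+z^3)*hω3

lemma quad_factor (b0 b1 b2 : ℂ) (h : b2 ≠ 0) :
    ∃ r0 r1 : ℂ, ∀ t : ℂ, b2*t^2 + b1*t + b0 = b2*(t-r0)*(t-r1) := by
  set p : Polynomial ℂ := Polynomial.C b2 * Polynomial.X^2
    + Polynomial.C b1 * Polynomial.X + Polynomial.C b0 with hp
  have hsp : p.Splits := IsAlgClosed.splits p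
  have hcard : p.roots.card = 2 := by
    rw [Polynomial.splits_iff_card_roots.mp hsp, hp, Polynomial.natDegree_quadratic h]
  obtain ⟨r0, r1, hr⟩ := Multiset.card_eq_two.mp hcard
  have heq := Polynomial.Splits.eq_prod_roots hsp
  rw [hr] at heq
  have hlc : p.leadingCoeff = b2 := by rw [hp]; exact Polynomial.leadingCoeff_quadratic h
  rw [hlc] at heq
  refine ⟨r0, r1, fun t => ?_⟩
  have := congrArg (Polynomial.eval t) heq
  simp [hp] at this
  linear_combination this

lemma cubic_factor (b0 b1 b2 b3 : ℂ) (h : b3 ≠ 0) :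
    ∃ r0 r1 r2 : ℂ, ∀ t : ℂ, b3*t^3 + b2*t^2 + b1*t + b0 = b3*(t-r0)*(t-r1)*(t-r2) := by
  set p : Polynomial ℂ := Polynomial.C b3 * Polynomial.X^3 + Polynomial.C b2 * Polynomial.X^2
    + Polynomial.C b1 * Polynomial.X + Polynomial.C b0 with hp
  have hsp : p.Splits := IsAlgClosed.splits p
  have hcard : p.roots.card = 3 := by
    rw [Polynomial.splits_iff_card_roots.mp hsp, hp, Polynomial.natDegree_cubic h]
  obtain ⟨r0, r1, r2, hr⟩ := Multiset.card_eq_three.mp hcard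
  have heq := Polynomial.Splits.eq_prod_roots hsp
  rw [hr] at heq
  have hlc : p.leadingCoeff = b3 := by rw [hp]; exact Polynomial.leadingCoeff_cubic h
  rw [hlc] at heq
  refine ⟨r0, r1, r2, fun t => ?_⟩
  have := congrArg (Polynomial.eval t) heq
  simp [hp] at this
  linear_combination this

lemma binary_cubic_factor (b0 b1 b2 b3 : ℂ) (h : b3 ≠ 0 ∨ (b3 = 0 ∧ b2 ≠ 0)) :
    ∃ k u0 v0 u1 v1 u2 v2 : ℂ, k ≠ 0 ∧ (u0 ≠ 0 ∨ v0 ≠ 0) ∧ (u1 ≠ 0 ∨ v1 ≠ 0) ∧ (u2 ≠ 0 ∨ v2 ≠ 0) ∧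
      ∀ y z : ℂ, b0*y^3 + b1*y^2*z + b2*y*z^2 + b3*z^3
        = k*(u0*y+v0*z)*(u1*y+v1*z)*(u2*y+v2*z) := by
  rcases h with h | ⟨h3, h2⟩
  · obtain ⟨r0, r1, r2, hr⟩ := cubic_factor b0 b1 b2 b3 h
    refine ⟨b3, -r0, 1, -r1, 1, -r2, 1, h, Or.inr one_ne_zero, Or.inr one_ne_zero,
      Or.inr one_ne_zero, fun y z => ?_⟩
    rcases eq_or_ne y 0 with rfl | hy
    · ring
    · calc b0*y^3 + b1*y^2*z + b2*y*z^2 + b3*z^3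
          = y^3 * (b3*(z/y)^3 + b2*(z/y)^2 + b1*(z/y) + b0) := by field_simp; ring
        _ = y^3 * (b3*(z/y-r0)*(z/y-r1)*(z/y-r2)) := by rw [hr]
        _ = b3*((-r0)*y+1*z)*((-r1)*y+1*z)*((-r2)*y+1*z) := by field_simp; ring
  · obtain ⟨r0, r1, hr⟩ := quad_factor b0 b1 b2 h2
    refine ⟨b2, 1, 0, -r0, 1, -r1, 1, h2, Or.inl one_ne_zero, Or.inr one_ne_zero,
      Or.inr one_ne_zero, fun y z => ?_⟩
    rcases eq_or_ne y 0 with rfl | hy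
    · simp [h3]
    · calc b0*y^3 + b1*y^2*z + b2*y*z^2 + b3*z^3
          = y^3 * (b2*(z/y)^2 + b1*(z/y) + b0) := by rw [h3]; field_simp; ring
        _ = y^3 * (b2*(z/y-r0)*(z/y-r1)) := by rw [hr]
        _ = b2*(1*y+0*z)*((-r0)*y+1*z)*((-r1)*y+1*z) := by field_simp; ring

lemma struct_f (f : MvPolynomial (Fin 3) ℂ) (hf : f.IsHomogeneous 3)
    (hvf : ∀ i ∈ f.vars, i = (0 : Fin 3)) :
    f = C (coeff (Finsupp.single 0 3) f) * X 0 ^ 3 := by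
  have hsupp : f.support ⊆ {Finsupp.single 0 3} := by
    intro m hm
    have hm0 : ∀ i, i ≠ (0 : Fin 3) → m i = 0 := by
      intro i hi
      by_contra h
      exact hi (hvf i ((mem_vars i).mpr ⟨m, hm, Finsupp.mem_support_iff.mpr h⟩))
    have hdeg : (Finsupp.weight 1) m = 3 := hf (mem_support_iff.mp hm)
    have hm1 : m = Finsupp.single 0 (m 0) := by
      ext i
      rcases eq_or_ne i 0 with rfl | hi
      · simp
      · simp [Finsupp.single_apply, Ne.symm hi, hm0 i hi]
    have h3 : m 0 = 3 := by
      rw [hm1] at hdeg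
      simpa [Finsupp.weight_apply, Finsupp.sum_single_index] using hdeg
    rw [Finset.mem_singleton, hm1, h3]
  have h4 := as_sum f
  rw [Finset.sum_subset hsupp (fun x _ hx => by
    rw [notMem_support_iff.mp hx, map_zero]), Finset.sum_singleton] at h4
  rw [X_pow_eq_monomial, C_mul_monomial, mul_one]; exact h4

lemma struct_g (g : MvPolynomial (Fin 3) ℂ) (hg : g.IsHomogeneous 3)
    (hvg : ∀ i ∈ g.vars, i = (1 : Fin 3) ∨ i = (2 : Fin 3)) :
    g = C (coeff d30 g) * X 1 ^ 3 + C (coeff d21 g) * (X 1 ^ 2 * X 2)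
      + C (coeff d12 g) * (X 1 * X 2 ^ 2) + C (coeff d03 g) * X 2 ^ 3 := by
  classical
  have hd30 : d30 = Finsupp.single 1 (3-0) + Finsupp.single 2 0 := by simp [d30]
  have hd21 : d21 = Finsupp.single 1 (3-1) + Finsupp.single 2 1 := rfl
  have hd12 : d12 = Finsupp.single 1 (3-2) + Finsupp.single 2 2 := rfl
  have hd03 : d03 = Finsupp.single 1 (3-3) + Finsupp.single 2 3 := by simp [d03]
  have hsupp : g.support ⊆ {d30, d21, d12, d03} := by
    intro m hm
    have hm0 : ∀ i : Fin 3, i ≠ 1 → i ≠ 2 → m i = 0 := by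
      intro i h1 h2
      by_contra h
      rcases hvg i ((mem_vars i).mpr ⟨m, hm, Finsupp.mem_support_iff.mpr h⟩) with h' | h'
      exacts [h1 h', h2 h']
    have hdeg : (Finsupp.weight 1) m = 3 := hg (mem_support_iff.mp hm)
    have hm1 : m = Finsupp.single 1 (m 1) + Finsupp.single 2 (m 2) := by
      ext i
      fin_cases i <;> simp [Finsupp.single_apply, hm0]
    have hsum : m 1 + m 2 = 3 := by
      rw [hm1] at hdeg
      simp [Finsupp.weight_apply, Finsupp.sum_add_index, Finsupp.sum_single_index] at hdeg
      convert hdeg using 2 <;> simp [Finsupp.single_apply]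
    have h2le : m 2 ≤ 3 := by omega
    have h1eq : m 1 = 3 - m 2 := by omega
    rw [hm1, h1eq]
    interval_cases h : m 2 <;>
      simp [hd30, hd21, hd12, hd03, Finset.mem_insert]
  have h4 := as_sum g
  rw [Finset.sum_subset hsupp (fun x _ hx => by
    rw [notMem_support_iff.mp hx, map_zero])] at h4
  have e30 : C (coeff d30 g) * X 1 ^ 3 = monomial d30 (coeff d30 g) := by
    simp only [X_pow_eq_monomial, C_mul_monomial, mul_one]; rfl
  have e21 : C (coeff d21 g) * (X 1 ^ 2 * X 2) = monomial d21 (coeff d21 g) := by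
    rw [← pow_one (X 2 : MvPolynomial (Fin 3) ℂ)]
    simp only [X_pow_eq_monomial, monomial_mul, C_mul_monomial, mul_one, one_mul]; rfl
  have e12 : C (coeff d12 g) * (X 1 * X 2 ^ 2) = monomial d12 (coeff d12 g) := by
    rw [← pow_one (X 1 : MvPolynomial (Fin 3) ℂ)]
    simp only [X_pow_eq_monomial, monomial_mul, C_mul_monomial, mul_one, one_mul]; rfl
  have e03 : C (coeff d03 g) * X 2 ^ 3 = monomial d03 (coeff d03 g) := by
    simp only [X_pow_eq_monomial, C_mul_monomial, mul_one]; rfl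
  have n1 : d30 ≠ d21 := fun h => by
    have := DFunLike.congr_fun h (2 : Fin 3); simp [d30, d21, Finsupp.single_apply] at this
  have n2 : d30 ≠ d12 := fun h => by
    have := DFunLike.congr_fun h (2 : Fin 3); simp [d30, d12, Finsupp.single_apply] at this
  have n3 : d30 ≠ d03 := fun h => by
    have := DFunLike.congr_fun h (2 : Fin 3); simp [d30, d03, Finsupp.single_apply] at this
  have n4 : d21 ≠ d12 := fun h => by
    have := DFunLike.congr_fun h (2 : Fin 3); simp [d21, d12, Finsupp.single_apply] at this
  have n5 : d21 ≠ d03 := fun h => by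
    have := DFunLike.congr_fun h (2 : Fin 3); simp [d21, d03, Finsupp.single_apply] at this
  have n6 : d12 ≠ d03 := fun h => by
    have := DFunLike.congr_fun h (2 : Fin 3); simp [d12, d03, Finsupp.single_apply] at this
  conv_lhs => rw [h4]
  rw [Finset.sum_insert (by simp [Finset.mem_insert, n1, n2, n3]),
    Finset.sum_insert (by simp [Finset.mem_insert, n4, n5]),
    Finset.sum_insert (by simp [Finset.mem_insert, n6]), Finset.sum_singleton,
    ← e30, ← e21, ← e12, ← e03]
  ring

lemma helper_two_vanish (k : ℂ) (p q r : MvPolynomial (Fin 3) ℂ) (w : Fin 3 → ℂ) (m : Fin 3)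
    (hp : eval w p = 0) (hq : eval w q = 0) :
    eval w (pderiv m (C k * p * q * r)) = 0 := by
  simp [pderiv_mul, pderiv_C, hp, hq]

lemma helper_two_vanish13 (k : ℂ) (p q r : MvPolynomial (Fin 3) ℂ) (w : Fin 3 → ℂ) (m : Fin 3)
    (hp : eval w p = 0) (hr : eval w r = 0) :
    eval w (pderiv m (C k * p * q * r)) = 0 := by
  simp [pderiv_mul, pderiv_C, hp, hr]

lemma helper_two_vanish23 (k : ℂ) (p q r : MvPolynomial (Fin 3) ℂ) (w : Fin 3 → ℂ) (m : Fin 3)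
    (hq : eval w q = 0) (hr : eval w r = 0) :
    eval w (pderiv m (C k * p * q * r)) = 0 := by
  simp [pderiv_mul, pderiv_C, hq, hr]

theorem sebastianiThom_cubic_is_fermat
    (f g : MvPolynomial (Fin 3) ℂ)
    (hf : f.IsHomogeneous 3) (hg : g.IsHomogeneous 3)
    (hvf : ∀ i ∈ f.vars, i = (0 : Fin 3))
    (hvg : ∀ i ∈ g.vars, i = (1 : Fin 3) ∨ i = (2 : Fin 3))
    (hs : IsSmooth3 (f + g)) :
    ∃ A : Matrix (Fin 3) (Fin 3) ℂ, IsUnit A ∧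
      ∃ c : ℂ, c ≠ 0 ∧
        MvPolynomial.aeval (fun j => ∑ i, A i j • MvPolynomial.X i) (f + g) =
          c • ((MvPolynomial.X 0 ^ 3 + MvPolynomial.X 1 ^ 3 + MvPolynomial.X 2 ^ 3 :
                MvPolynomial (Fin 3) ℂ)) := by
  classical
  set a := coeff (Finsupp.single 0 3) f with ha_def
  set b0 := coeff d30 g with hb0_def
  set b1 := coeff d21 g with hb1_def
  set b2 := coeff d12 g with hb2_def
  set b3 := coeff d03 g with hb3_def
  have hfa : f = C a * X 0 ^ 3 := struct_f f hf hvf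
  have hgb : g = C b0 * X 1 ^ 3 + C b1 * (X 1 ^ 2 * X 2)
      + C b2 * (X 1 * X 2 ^ 2) + C b3 * X 2 ^ 3 := struct_g g hg hvg
  have hFG : f + g = C a * X 0 ^ 3 + (C b0 * X 1 ^ 3 + C b1 * (X 1 ^ 2 * X 2)
      + C b2 * (X 1 * X 2 ^ 2) + C b3 * X 2 ^ 3) := by rw [hfa, hgb]
  -- a ≠ 0
  have hA : a ≠ 0 := by
    intro h0
    have hz := hs ![1,0,0] (fun i => by
      rw [hFG]
      fin_cases i <;>
        simp [pderiv_mul, pderiv_pow, pderiv_X, pderiv_C, Pi.single_apply, h0])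
    have := congrFun hz 0
    simp at this
  -- b3 ≠ 0 ∨ (b3 = 0 ∧ b2 ≠ 0)
  have hB : b3 ≠ 0 ∨ (b3 = 0 ∧ b2 ≠ 0) := by
    by_cases h3 : b3 = 0
    · refine Or.inr ⟨h3, ?_⟩
      intro h2
      have hz := hs ![0,0,1] (fun i => by
        rw [hFG]
        fin_cases i <;>
          simp [pderiv_mul, pderiv_pow, pderiv_X, pderiv_C, Pi.single_apply, h3, h2])
      have := congrFun hz 2
      simp at this
    · exact Or.inl h3
  obtain ⟨k, u0, v0, u1, v1, u2, v2, hk, hw0, hw1, hw2, hfact⟩ :=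
    binary_cubic_factor b0 b1 b2 b3 hB
  have hgpoly : g = C k * (C u0 * X 1 + C v0 * X 2) * (C u1 * X 1 + C v1 * X 2)
      * (C u2 * X 1 + C v2 * X 2) := by
    apply MvPolynomial.funext
    intro w
    rw [hgb]
    simp only [eval_add, eval_mul, eval_pow, eval_C, eval_X]
    linear_combination hfact (w 1) (w 2)
  have hFG2 : f + g = C a * X 0 ^ 3 + C k * (C u0 * X 1 + C v0 * X 2)
      * (C u1 * X 1 + C v1 * X 2) * (C u2 * X 1 + C v2 * X 2) := by rw [hfa, hgpoly]
  -- the f-part has vanishing partial evals when w 0 = 0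
  have hfpart : ∀ (w : Fin 3 → ℂ) (m : Fin 3), w 0 = 0 →
      eval w (pderiv m (C a * X 0 ^ 3)) = 0 := by
    intro w m hw
    fin_cases m <;> simp [pderiv_mul, pderiv_pow, pderiv_X, pderiv_C, Pi.single_apply, hw]
  -- pairwise independence
  have pair : ∀ (p q : ℂ), (p ≠ 0 ∨ q ≠ 0) →
      (∀ m : Fin 3, eval ![0, q, -p] (pderiv m (f+g)) = 0) → False := by
    intro p q hpq hvan
    have hz := hs ![0, q, -p] hvan
    have e1 := congrFun hz 1
    have e2 := congrFun hz 2
    simp at e1 e2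
    rcases hpq with h | h
    exacts [h e2, h e1]
  have h01 : u0*v1 - u1*v0 ≠ 0 := by
    intro hd
    refine pair u0 v0 hw0 (fun m => ?_)
    rw [hFG2, map_add, map_add]
    rw [hfpart ![0, v0, -u0] m (by simp)]
    rw [helper_two_vanish k _ _ _ ![0, v0, -u0] m
      (by simp; ring) (by simp; linear_combination -hd)]
    ring
  have h02 : u0*v2 - u2*v0 ≠ 0 := by
    intro hd
    refine pair u0 v0 hw0 (fun m => ?_)
    rw [hFG2, map_add, map_add]
    rw [hfpart ![0, v0, -u0] m (by simp)]
    rw [helper_two_vanish13 k _ _ _ ![0, v0, -u0] m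
      (by simp; ring) (by simp; linear_combination -hd)]
    ring
  have h12 : u1*v2 - u2*v1 ≠ 0 := by
    intro hd
    refine pair u1 v1 hw1 (fun m => ?_)
    rw [hFG2, map_add, map_add]
    rw [hfpart ![0, v1, -u1] m (by simp)]
    rw [helper_two_vanish23 k _ _ _ ![0, v1, -u1] m
      (by simp; ring) (by simp; linear_combination -hd)]
    ring
  obtain ⟨α, P1, P2, Q1, Q2, c, hc0, hα0, hdet, hmain⟩ :=
    master a k u0 v0 u1 v1 u2 v2 hA hk h01 h02 h12
  refine ⟨Matrix.of ![![α,0,0],![0,P1,Q1],![0,P2,Q2]], ?_, c, hc0, ?_⟩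
  · rw [Matrix.isUnit_iff_isUnit_det, Matrix.det_fin_three]
    simp only [Matrix.of_apply, Matrix.cons_val', Matrix.cons_val_zero, Matrix.cons_val_one,
      Matrix.head_cons, Matrix.empty_val', Matrix.cons_val_fin_one, Matrix.head_fin_const,
      Matrix.cons_val_two, Matrix.tail_cons]
    rw [isUnit_iff_ne_zero]
    intro h
    have : α * (P1*Q2 - P2*Q1) = 0 := by linear_combination h
    rcases mul_eq_zero.mp this with h' | h'
    exacts [hα0 h', hdet h']
  · apply MvPolynomial.funext
    intro w
    set A : Matrix (Fin 3) (Fin 3) ℂ := Matrix.of ![![α,0,0],![0,P1,Q1],![0,P2,Q2]] with hAdef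
    have hcomp : eval w (aeval (fun j => ∑ i, A i j • X i) (f+g))
        = eval (fun j => eval w (∑ i, A i j • X i)) (f+g) := by
      rw [aeval_def, MvPolynomial.algebraMap_eq, ← eval_assoc]
      rfl
    rw [hcomp]
    have hES : ∀ j : Fin 3, eval w (∑ i, A i j • X i)
        = A 0 j * w 0 + A 1 j * w 1 + A 2 j * w 2 := by
      intro j
      simp [Fin.sum_univ_three, smul_eval]
    have h00 : A 0 0 = α := rfl
    have h10 : A 1 0 = 0 := rfl
    have h20 : A 2 0 = 0 := rfl
    have h01' : A 0 1 = 0 := rfl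
    have h11 : A 1 1 = P1 := rfl
    have h21 : A 2 1 = P2 := rfl
    have h02' : A 0 2 = 0 := rfl
    have h12' : A 1 2 = Q1 := rfl
    have h22 : A 2 2 = Q2 := rfl
    rw [hFG2]
    simp only [eval_add, eval_mul, eval_pow, eval_C, eval_X, smul_eval, hES,
      h00, h10, h20, h01', h11, h21, h02', h12', h22]
    linear_combination hmain (w 0) (w 1) (w 2)
end

section
/- Let 0 ≤ l ≤ n−1 and let f₁ ∈ ℂ[x₀,…,x_l] and f₂ ∈ ℂ[x_{l+1},…,xₙ] be nonzero homogeneous polynomials of the same degree k ≥ 1, regarded as elements of ℂ[x₀,…,xₙ], and suppose f₁ + f₂ is smooth. Then there exists a smooth homogeneous polynomial g ∈ ℂ[x₀,…,xₙ] of degree k (for instance g = μf₁ + f₂ for any μ ∈ ℂ^× with μ ≠ 1) such that J(g) = J(f₁ + f₂) and g is not a scalar multiple of f₁ + f₂. -/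
open MvPolynomial

theorem exists_nonproportional_with_same_jacobi (n l k : ℕ) (hl : l + 1 ≤ n) (hk : 1 ≤ k)
    (f₁ f₂ : MvPolynomial (Fin (n + 1)) ℂ) (hf₁0 : f₁ ≠ 0) (hf₂0 : f₂ ≠ 0)
    (hf₁ : f₁.IsHomogeneous k) (hf₂ : f₂.IsHomogeneous k)
    (hv₁ : ∀ i ∈ f₁.vars, (i : ℕ) ≤ l) (hv₂ : ∀ i ∈ f₂.vars, l < (i : ℕ))
    (hs : IsSmooth n (f₁ + f₂)) :
    ∃ g : MvPolynomial (Fin (n + 1)) ℂ, g.IsHomogeneous k ∧ IsSmooth n g ∧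
      jacobiIdeal n g = jacobiIdeal n (f₁ + f₂) ∧
      ¬ ∃ c : ℂ, g = c • (f₁ + f₂) := by
  have hp1 : ∀ i : Fin (n + 1), ¬ (i : ℕ) ≤ l → pderiv i f₁ = 0 := fun i hi =>
    pderiv_eq_zero_of_notMem_vars (fun h => absurd (hv₁ i h) hi)
  have hp2 : ∀ i : Fin (n + 1), (i : ℕ) ≤ l → pderiv i f₂ = 0 := fun i hi =>
    pderiv_eq_zero_of_notMem_vars (fun h => absurd (hv₂ i h) (not_lt.2 hi))
  have hdle : ∀ i : Fin (n + 1), (i : ℕ) ≤ l →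
      pderiv i ((2 : ℂ) • f₁ + f₂) = (2 : ℂ) • pderiv i (f₁ + f₂) := by
    intro i hi
    rw [map_add, map_add, Derivation.map_smul, hp2 i hi, add_zero, add_zero]
  have hdgt : ∀ i : Fin (n + 1), ¬ (i : ℕ) ≤ l →
      pderiv i ((2 : ℂ) • f₁ + f₂) = pderiv i (f₁ + f₂) := by
    intro i hi
    rw [map_add, map_add, Derivation.map_smul, hp1 i hi, smul_zero, zero_add]
  have hhom : ((2 : ℂ) • f₁ + f₂).IsHomogeneous k := by
    rw [← mem_homogeneousSubmodule] at hf₁ hf₂ ⊢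
    exact Submodule.add_mem _ (Submodule.smul_mem _ _ hf₁) hf₂
  refine ⟨(2 : ℂ) • f₁ + f₂, hhom, ?_, ?_, ?_⟩
  · -- smoothness
    intro x hx
    apply hs x
    intro i
    by_cases hi : (i : ℕ) ≤ l
    · have := hx i
      rw [hdle i hi, smul_eq_C_mul, map_mul, eval_C, mul_eq_zero] at this
      rcases this with h | h
      · norm_num at h
      · exact h
    · have := hx i
      rwa [hdgt i hi] at this
  · -- jacobi ideals
    apply le_antisymm <;> rw [jacobiIdeal, jacobiIdeal, Ideal.span_le] <;>
      rintro _ ⟨i, rfl⟩ <;> by_cases hi : (i : ℕ) ≤ l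
    · show pderiv i ((2:ℂ) • f₁ + f₂) ∈ Ideal.span (Set.range fun j => pderiv j (f₁ + f₂))
      rw [hdle i hi, smul_eq_C_mul]
      exact Ideal.mul_mem_left _ _ (Ideal.subset_span (Set.mem_range_self i))
    · show pderiv i ((2:ℂ) • f₁ + f₂) ∈ Ideal.span (Set.range fun j => pderiv j (f₁ + f₂))
      rw [hdgt i hi]
      exact Ideal.subset_span (Set.mem_range_self i)
    · show pderiv i (f₁ + f₂) ∈ Ideal.span (Set.range fun j => pderiv j ((2:ℂ) • f₁ + f₂))
      have heq : pderiv i (f₁ + f₂) = C (2⁻¹ : ℂ) * pderiv i ((2 : ℂ) • f₁ + f₂) := by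
        rw [hdle i hi, smul_eq_C_mul, ← mul_assoc, ← C_mul]
        norm_num
      rw [heq]
      exact Ideal.mul_mem_left _ _ (Ideal.subset_span (Set.mem_range_self i))
    · show pderiv i (f₁ + f₂) ∈ Ideal.span (Set.range fun j => pderiv j ((2:ℂ) • f₁ + f₂))
      rw [← hdgt i hi]
      exact Ideal.subset_span (Set.mem_range_self i)
  · -- non-proportionality
    rintro ⟨c, hc⟩
    rw [smul_add] at hc
    have key : ((2 : ℂ) - c) • f₁ = (c - 1) • f₂ := by
      rw [sub_smul, sub_smul, one_smul]
      linear_combination (norm := module) hc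
    by_cases hc2 : c = 2
    · rw [hc2, sub_self, zero_smul] at key
      have h21 : ((2 : ℂ) - 1) = 1 := by norm_num
      rw [h21, one_smul] at key
      exact hf₂0 key.symm
    · obtain ⟨m, hm⟩ := (support_nonempty (p := f₁)).2 hf₁0
      have hm1 : coeff m f₁ ≠ 0 := mem_support_iff.1 hm
      have hcoeff : ((2 : ℂ) - c) * coeff m f₁ = (c - 1) * coeff m f₂ := by
        have := congrArg (coeff m) key
        simpa [coeff_smul] using this
      have h2c : ((2 : ℂ) - c) ≠ 0 := sub_ne_zero.2 (Ne.symm hc2)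
      have hm2 : coeff m f₂ ≠ 0 := by
        intro h
        rw [h, mul_zero] at hcoeff
        exact (mul_ne_zero h2c hm1) hcoeff
      have hdeg : (Finsupp.weight 1) m = k := hf₁ hm1
      have hm0 : m ≠ 0 := by
        rintro rfl
        rw [map_zero] at hdeg
        omega
      obtain ⟨i, hi⟩ := Finsupp.support_nonempty_iff.2 hm0
      have hi1 : i ∈ f₁.vars := (mem_vars i).2 ⟨m, hm, hi⟩
      have hi2 : i ∈ f₂.vars := (mem_vars i).2 ⟨m, mem_support_iff.2 hm2, hi⟩
      exact absurd (hv₂ i hi2) (not_lt.2 (hv₁ i hi1))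
end
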